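/- Let ν be a finite positive even Borel measure on ℝ such that the function λ ↦ ∫_ℝ e^{λx} dν(x) is bounded on ℝ (equivalently, λ ↦ ∫_ℝ cosh(λx) dν(x) is bounded). Then ν(ℝ \ {0}) = 0, i.e. ν is a nonnegative multiple of the Dirac measure at 0. -/

import Mathlib

open MeasureTheory Filter Set
open scoped ENNReal

/-! By Markov's inequality `e^{t a} μ [a, ∞) ≤ ∫ e^{t x} dμ ≤ C` for every `t ≥ 0`, and letting
`t → ∞` forces `μ [a, ∞) = 0` for each `a > 0`, hence `μ (0, ∞) = 0`. Negative `t` treat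
`(-∞, 0)` in the same way, through the image of `μ` under `x ↦ -x`. -/

theorem mul_measure_Ici_le_lintegral_exp (μ : Measure ℝ) {t : ℝ} (ht : 0 ≤ t) (a : ℝ) :
    ENNReal.ofReal (Real.exp (t * a)) * μ (Ici a) ≤
      ∫⁻ x, ENNReal.ofReal (Real.exp (t * x)) ∂μ := by
  refine le_trans (mul_le_mul_right (measure_mono fun x (hx : a ≤ x) => ?_) _)
    (mul_meas_ge_le_lintegral₀ (by fun_prop) _)
  exact ENNReal.ofReal_le_ofReal (Real.exp_le_exp.2 (mul_le_mul_of_nonneg_left hx ht))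

section BoundedLaplaceTransform

variable (μ : Measure ℝ) {C : ℝ≥0∞}

theorem measure_Ici_eq_zero_of_lintegral_exp_le (hC : C ≠ ∞)
    (h_bdd : ∀ t : ℝ, ∫⁻ x, ENNReal.ofReal (Real.exp (t * x)) ∂μ ≤ C) {a : ℝ} (ha : 0 < a) :
    μ (Ici a) = 0 := by
  by_contra hμ
  obtain ⟨n, hn⟩ := ENNReal.exists_nat_mul_gt hμ hC
  have h_exp : (n : ℝ≥0∞) ≤ ENNReal.ofReal (Real.exp (n / a * a)) := by
    rw [div_mul_cancel₀ _ ha.ne', ← ENNReal.ofReal_natCast]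
    exact ENNReal.ofReal_le_ofReal
      ((le_add_of_nonneg_right zero_le_one).trans (Real.add_one_le_exp _))
  refine hn.not_ge ?_
  calc (n : ℝ≥0∞) * μ (Ici a)
      ≤ ENNReal.ofReal (Real.exp (n / a * a)) * μ (Ici a) := by gcongr
    _ ≤ C := (mul_measure_Ici_le_lintegral_exp μ (by positivity) a).trans (h_bdd _)

theorem measure_Ioi_eq_zero_of_lintegral_exp_le (hC : C ≠ ∞)
    (h_bdd : ∀ t : ℝ, ∫⁻ x, ENNReal.ofReal (Real.exp (t * x)) ∂μ ≤ C) :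
    μ (Ioi 0) = 0 := by
  rw [← iUnion_Ici_eq_Ioi_of_lt_of_tendsto (fun n : ℕ => Nat.one_div_pos_of_nat)
    tendsto_one_div_add_atTop_nhds_zero_nat]
  exact measure_iUnion_null fun n =>
    measure_Ici_eq_zero_of_lintegral_exp_le μ hC h_bdd Nat.one_div_pos_of_nat

theorem measure_Iio_eq_zero_of_lintegral_exp_le (hC : C ≠ ∞)
    (h_bdd : ∀ t : ℝ, ∫⁻ x, ENNReal.ofReal (Real.exp (t * x)) ∂μ ≤ C) :
    μ (Iio 0) = 0 := by
  have h_bdd_neg (t : ℝ) : ∫⁻ x, ENNReal.ofReal (Real.exp (t * x)) ∂μ.map Neg.neg ≤ C := by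
    rw [lintegral_map (by fun_prop) measurable_neg]
    simpa using h_bdd (-t)
  have h_neg := measure_Ioi_eq_zero_of_lintegral_exp_le _ hC h_bdd_neg
  rwa [Measure.map_apply measurable_neg measurableSet_Ioi, Set.neg_preimage, Set.neg_Ioi,
    neg_zero] at h_neg

end BoundedLaplaceTransform

theorem bounded_laplace_transform_measure_is_dirac_general
    (ν : Measure ℝ)
    (h_bdd : ∃ C : ℝ, ∀ t : ℝ,
      ∫⁻ x : ℝ, ENNReal.ofReal (Real.exp (t * x)) ∂ν ≤ ENNReal.ofReal C) :
    ν ({0}ᶜ : Set ℝ) = 0 := by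
  obtain ⟨C, hC⟩ := h_bdd
  rw [← Iio_union_Ioi]
  exact measure_union_null (measure_Iio_eq_zero_of_lintegral_exp_le ν ENNReal.ofReal_ne_top hC)
    (measure_Ioi_eq_zero_of_lintegral_exp_le ν ENNReal.ofReal_ne_top hC)

/-- If `ν` is a finite positive even Borel measure on ℝ whose two-sided Laplace
transform `t ↦ ∫ e^{t x} dν(x)` is bounded on ℝ, then `ν` vanishes off the origin,
i.e. `ν` is a nonnegative multiple of the Dirac measure at `0`. -/
theorem bounded_laplace_transform_measure_is_dirac
    (ν : Measure ℝ) [IsFiniteMeasure ν]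
    (h_even : ν.map (fun x => -x) = ν)
    (h_bdd : ∃ C : ℝ, ∀ t : ℝ,
      ∫⁻ x : ℝ, ENNReal.ofReal (Real.exp (t * x)) ∂ν ≤ ENNReal.ofReal C) :
    ν ({0}ᶜ : Set ℝ) = 0 :=
  bounded_laplace_transform_measure_is_dirac_general ν h_bdd
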